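/- (Lemma: slackness varies slowly in the John local norm) Let x, y be in the interior of K and let w be a positive vector satisfying the John fixed-point equations at x, defining J_x = Σ_{i=1}^m w_i a_i a_i^⊤ / s_{x,i}². Then max_{i∈[m]} |1 − s_{y,i}/s_{x,i}| ≤ 2 ‖x − y‖_{J_x}, where ‖v‖_{J_x} = (v^⊤ J_x v)^{1/2}. -/

import Mathlib

/-!
Write `B = A_x`, `c = w^α` and `G = Bᵀ diag(c) B`, so that `(P_{x,w})_{ii} = c_i q_i` where
`q_i = b_iᵀ G⁻¹ b_i` is the leverage score of row `i` for `G`. Then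
`s_{y,i}/s_{x,i} − 1 = (B(x − y))_i`, and Cauchy–Schwarz for the form `G⁻¹` gives
`(Bv)_i² ≤ q_i · vᵀGv`. The fixed-point equation yields `w_i ≥ β_J` and `c_i q_i ≤ w_i`; together
with the general bound `c_i q_i ≤ 1` this forces `q_i ≤ 1`. Finally `β_J^{1−α} = 1/2` turns
`w_i ≥ β_J` into `w_i^α ≤ 2 w_i`, so `vᵀGv ≤ 2 vᵀJ_x v`.
-/

open Matrix MeasureTheory Real Set
open scoped ENNReal

noncomputable section

namespace PolytopeWalks

/-- Slackness `s_{x,i} = b_i − a_i^⊤ x`. -/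
def slack {d m : ℕ} (A : Matrix (Fin m) (Fin d) ℝ) (b : Fin m → ℝ) (x : Fin d → ℝ)
    (i : Fin m) : ℝ :=
  b i - A.mulVec x i

/-- The polytope `K = {x : A x ≤ b}`. -/
def poly {d m : ℕ} (A : Matrix (Fin m) (Fin d) ℝ) (b : Fin m → ℝ) : Set (Fin d → ℝ) :=
  {x | ∀ i, A.mulVec x i ≤ b i}

/-- The interior of the polytope: all slacks positive. -/
def interiorPoly {d m : ℕ} (A : Matrix (Fin m) (Fin d) ℝ) (b : Fin m → ℝ) :
    Set (Fin d → ℝ) :=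
  {x | ∀ i, 0 < slack A b x i}

/-- Hessian of the logarithmic barrier, `∇²F_x = Σ_i a_i a_i^⊤ / s_{x,i}²`. -/
def logHess {d m : ℕ} (A : Matrix (Fin m) (Fin d) ℝ) (b : Fin m → ℝ) (x : Fin d → ℝ) :
    Matrix (Fin d) (Fin d) ℝ :=
  ∑ i : Fin m, ((slack A b x i) ^ 2)⁻¹ • vecMulVec (A i) (A i)

/-- Leverage scores `σ_{x,i} = a_i^⊤ (∇²F_x)⁻¹ a_i / s_{x,i}²`. -/
def lev {d m : ℕ} (A : Matrix (Fin m) (Fin d) ℝ) (b : Fin m → ℝ) (x : Fin d → ℝ)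
    (i : Fin m) : ℝ :=
  (A i) ⬝ᵥ ((logHess A b x)⁻¹ *ᵥ (A i)) / (slack A b x i) ^ 2

/-- The Vaidya matrix `V_x = Σ_i (σ_{x,i} + d/m) a_i a_i^⊤ / s_{x,i}²`. -/
def vaidyaMat {d m : ℕ} (A : Matrix (Fin m) (Fin d) ℝ) (b : Fin m → ℝ) (x : Fin d → ℝ) :
    Matrix (Fin d) (Fin d) ℝ :=
  ∑ i : Fin m, ((lev A b x i + (d : ℝ) / m) / (slack A b x i) ^ 2) • vecMulVec (A i) (A i)

/-- Vaidya local norm `‖v‖_{V_x} = (v^⊤ V_x v)^{1/2}`. -/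
def vNorm {d m : ℕ} (A : Matrix (Fin m) (Fin d) ℝ) (b : Fin m → ℝ) (x v : Fin d → ℝ) : ℝ :=
  Real.sqrt (v ⬝ᵥ (vaidyaMat A b x *ᵥ v))

/-- Vaidya slack sensitivities `θ_{x,i} = a_i^⊤ V_x⁻¹ a_i / s_{x,i}²`. -/
def thetaV {d m : ℕ} (A : Matrix (Fin m) (Fin d) ℝ) (b : Fin m → ℝ) (x : Fin d → ℝ)
    (i : Fin m) : ℝ :=
  (A i) ⬝ᵥ ((vaidyaMat A b x)⁻¹ *ᵥ (A i)) / (slack A b x i) ^ 2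

/-- Rescaled constraint matrix `A_x = S_x⁻¹ A`. -/
def Amat {d m : ℕ} (A : Matrix (Fin m) (Fin d) ℝ) (b : Fin m → ℝ) (x : Fin d → ℝ) :
    Matrix (Fin m) (Fin d) ℝ :=
  Matrix.of fun i j => A i j / slack A b x i

/-- The projection matrix `P_x = A_x (A_x^⊤ A_x)⁻¹ A_x^⊤` onto the column space of `A_x`. -/
def projMat {d m : ℕ} (A : Matrix (Fin m) (Fin d) ℝ) (b : Fin m → ℝ) (x : Fin d → ℝ) :
    Matrix (Fin m) (Fin m) ℝ :=
  Amat A b x * (logHess A b x)⁻¹ * (Amat A b x)ᵀ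

/-- Entrywise (Hadamard) square of a matrix. -/
def hadSq {n : ℕ} (M : Matrix (Fin n) (Fin n) ℝ) : Matrix (Fin n) (Fin n) ℝ :=
  Matrix.of fun i j => (M i j) ^ 2

/-- `κ = log₂(2m/d)`. -/
def kappaJ (d m : ℕ) : ℝ := Real.logb 2 ((2 * m : ℝ) / d)

/-- `α = 1 − 1/log₂(2m/d)`. -/
def alphaJ (d m : ℕ) : ℝ := 1 - 1 / Real.logb 2 ((2 * m : ℝ) / d)

/-- `β_J = d/(2m)`. -/
def betaJ (d m : ℕ) : ℝ := (d : ℝ) / (2 * m)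

/-- The weighted projection matrix
`P_{x,w} = W^{α/2} A_x (A_x^⊤ W^α A_x)⁻¹ A_x^⊤ W^{α/2}`. -/
def johnProj {d m : ℕ} (A : Matrix (Fin m) (Fin d) ℝ) (b : Fin m → ℝ) (x : Fin d → ℝ)
    (w : Fin m → ℝ) : Matrix (Fin m) (Fin m) ℝ :=
  Matrix.diagonal (fun i => w i ^ (alphaJ d m / 2)) * Amat A b x *
    ((Amat A b x)ᵀ * Matrix.diagonal (fun i => w i ^ alphaJ d m) * Amat A b x)⁻¹ *
    (Amat A b x)ᵀ * Matrix.diagonal (fun i => w i ^ (alphaJ d m / 2))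

/-- `w` is a positive solution of the John fixed-point equations
`w_i = (P_{x,w})_{ii} + β_J` at `x`. -/
def IsJohnWeight {d m : ℕ} (A : Matrix (Fin m) (Fin d) ℝ) (b : Fin m → ℝ) (x : Fin d → ℝ)
    (w : Fin m → ℝ) : Prop :=
  (∀ i, 0 < w i) ∧ ∀ i, w i = johnProj A b x w i i + betaJ d m

/-- The John matrix `J_x = Σ_i w_i a_i a_i^⊤ / s_{x,i}²` built from weights `w`. -/
def johnMat {d m : ℕ} (A : Matrix (Fin m) (Fin d) ℝ) (b : Fin m → ℝ) (x : Fin d → ℝ)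
    (w : Fin m → ℝ) : Matrix (Fin d) (Fin d) ℝ :=
  ∑ i : Fin m, (w i / (slack A b x i) ^ 2) • vecMulVec (A i) (A i)

theorem _root_.Matrix.mulVec_injective_of_rank_eq_card {m n : Type*} [Fintype n]
    {A : Matrix m n ℝ} (h : A.rank = Fintype.card n) : Function.Injective A.mulVec := by
  rw [mulVec_injective_iff, linearIndependent_iff_card_eq_finrank_span, Set.finrank,
    ← rank_eq_finrank_span_cols, h]

theorem _root_.Matrix.mul_mul_transpose_apply_self {m n : Type*} [Fintype n]
    (B : Matrix m n ℝ) (M : Matrix n n ℝ) (j : m) :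
    (B * M * Bᵀ) j j = B j ⬝ᵥ (M *ᵥ B j) := by
  rw [dotProduct_mulVec, mul_apply']
  rfl

theorem _root_.Matrix.PosSemidef.dotProduct_mulVec_sq_le {n : Type*} [Fintype n]
    {M : Matrix n n ℝ} (hM : M.PosSemidef) (u v : n → ℝ) :
    (u ⬝ᵥ (M *ᵥ v)) ^ 2 ≤ (u ⬝ᵥ (M *ᵥ u)) * (v ⬝ᵥ (M *ᵥ v)) := by
  let := M.toSeminormedAddCommGroup hM
  let := M.toInnerProductSpace hM
  have h := real_inner_mul_inner_self_le u v
  change (M *ᵥ v) ⬝ᵥ star u * ((M *ᵥ v) ⬝ᵥ star u) ≤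
    ((M *ᵥ u) ⬝ᵥ star u) * ((M *ᵥ v) ⬝ᵥ star v) at h
  simpa only [sq, star_trivial, dotProduct_comm (M *ᵥ _)] using h

section WeightedLeverage

variable {m n : Type*} [Fintype m] [Fintype n] [DecidableEq m]

theorem dotProduct_transpose_diagonal_mul_mulVec (B : Matrix m n ℝ) (c : m → ℝ) (z : n → ℝ) :
    z ⬝ᵥ ((Bᵀ * diagonal c * B) *ᵥ z) = ∑ k, c k * (B *ᵥ z) k ^ 2 := by
  rw [← mulVec_mulVec, ← mulVec_mulVec, dotProduct_mulVec, vecMul_transpose]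
  simp only [dotProduct, mulVec_diagonal]
  exact Finset.sum_congr rfl fun k _ => by ring

variable {B : Matrix m n ℝ} {c : m → ℝ}

theorem posSemidef_transpose_diagonal_mul (hc : ∀ k, 0 ≤ c k) :
    (Bᵀ * diagonal c * B).PosSemidef := by
  simpa using (PosSemidef.diagonal hc).conjTranspose_mul_mul_same B

theorem posDef_transpose_diagonal_mul (hB : Function.Injective B.mulVec) (hc : ∀ k, 0 < c k) :
    (Bᵀ * diagonal c * B).PosDef := by
  simpa using (PosDef.diagonal hc).conjTranspose_mul_mul_same hB

variable [DecidableEq n]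

def weightedLeverage (B : Matrix m n ℝ) (c : m → ℝ) (i : m) : ℝ :=
  B i ⬝ᵥ ((Bᵀ * diagonal c * B)⁻¹ *ᵥ B i)

theorem weightedLeverage_nonneg (hc : ∀ k, 0 ≤ c k) (i : m) : 0 ≤ weightedLeverage B c i := by
  simpa [weightedLeverage] using
    (posSemidef_transpose_diagonal_mul hc).inv.dotProduct_mulVec_nonneg (B i)

theorem sq_mulVec_apply_le_weightedLeverage_mul (hB : Function.Injective B.mulVec)
    (hc : ∀ k, 0 < c k) (z : n → ℝ) (i : m) :
    (B *ᵥ z) i ^ 2 ≤ weightedLeverage B c i * (z ⬝ᵥ ((Bᵀ * diagonal c * B) *ᵥ z)) := by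
  set G := Bᵀ * diagonal c * B
  have hG : G⁻¹ * G = 1 := nonsing_inv_mul G <|
    (isUnit_iff_isUnit_det G).mp (posDef_transpose_diagonal_mul hB hc).isUnit
  have hBz : (B *ᵥ z) i = B i ⬝ᵥ (G⁻¹ *ᵥ (G *ᵥ z)) := by
    rw [mulVec_mulVec, hG, one_mulVec]; rfl
  have hzGz : (G *ᵥ z) ⬝ᵥ (G⁻¹ *ᵥ (G *ᵥ z)) = z ⬝ᵥ (G *ᵥ z) := by
    rw [mulVec_mulVec, hG, one_mulVec, dotProduct_comm]
  rw [hBz, ← hzGz]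
  exact (posDef_transpose_diagonal_mul hB hc).inv.posSemidef.dotProduct_mulVec_sq_le _ _

theorem mul_weightedLeverage_le_one (hB : Function.Injective B.mulVec) (hc : ∀ k, 0 < c k)
    (i : m) : c i * weightedLeverage B c i ≤ 1 := by
  set G := Bᵀ * diagonal c * B
  set q := weightedLeverage B c i
  set z := G⁻¹ *ᵥ B i
  have hG : G * G⁻¹ = 1 := mul_nonsing_inv G <|
    (isUnit_iff_isUnit_det G).mp (posDef_transpose_diagonal_mul hB hc).isUnit
  -- evaluate the Gram form at `z = G⁻¹ bᵢ`, where both `(B z)ᵢ` and `zᵀ G z` equal `q`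
  have hq : c i * q ^ 2 ≤ q := calc
    c i * q ^ 2 = c i * (B *ᵥ z) i ^ 2 := rfl
    _ ≤ ∑ k, c k * (B *ᵥ z) k ^ 2 :=
      Finset.single_le_sum (f := fun k => c k * (B *ᵥ z) k ^ 2)
        (fun k _ => mul_nonneg (hc k).le (sq_nonneg _)) (Finset.mem_univ i)
    _ = q := by
      rw [← dotProduct_transpose_diagonal_mul_mulVec, mulVec_mulVec, hG, one_mulVec,
        dotProduct_comm]
      rfl
  have hq0 : 0 ≤ q := weightedLeverage_nonneg (fun k => (hc k).le) i
  rcases hq0.eq_or_lt with hq_zero | hq_pos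
  · rw [← hq_zero, mul_zero]; exact zero_le_one
  · exact le_of_mul_le_mul_right (by nlinarith) hq_pos

end WeightedLeverage

section Exponents

variable {d m : ℕ}

theorem one_le_logb_two_mul_div (hd : 0 < d) (hdm : d ≤ m) : 1 ≤ logb 2 (2 * m / d : ℝ) := by
  have hd' : (0 : ℝ) < d := by exact_mod_cast hd
  have hdm' : (d : ℝ) ≤ m := by exact_mod_cast hdm
  have hm' : (0 : ℝ) < m := hd'.trans_le hdm'
  rw [Real.le_logb_iff_rpow_le one_lt_two (by positivity), Real.rpow_one, le_div_iff₀ hd']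
  linarith

theorem alphaJ_nonneg (hd : 0 < d) (hdm : d ≤ m) : 0 ≤ alphaJ d m := by
  have := one_le_logb_two_mul_div hd hdm
  rwa [alphaJ, sub_nonneg, div_le_one (by linarith)]

theorem alphaJ_le_one (hd : 0 < d) (hdm : d ≤ m) : alphaJ d m ≤ 1 := by
  have := one_le_logb_two_mul_div hd hdm
  rw [alphaJ, sub_le_self_iff]
  positivity

theorem betaJ_pos (hd : 0 < d) (hdm : d ≤ m) : 0 < betaJ d m := by
  have : 0 < m := hd.trans_le hdm
  rw [betaJ]
  positivity

theorem betaJ_rpow_one_sub_alphaJ (hd : 0 < d) (hdm : d ≤ m) :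
    betaJ d m ^ (1 - alphaJ d m) = 1 / 2 := by
  set L := logb 2 (2 * m / d : ℝ)
  have hL : L ≠ 0 := (zero_lt_one.trans_le (one_le_logb_two_mul_div hd hdm)).ne'
  have hc : (0 : ℝ) < 2 * m / d := by
    have : 0 < m := hd.trans_le hdm
    positivity
  have hβ : betaJ d m = (2 ^ L)⁻¹ := by
    rw [Real.rpow_logb two_pos one_lt_two.ne' hc, betaJ, inv_div]
  rw [hβ, alphaJ, sub_sub_cancel, Real.inv_rpow (by positivity), ← Real.rpow_mul zero_le_two,
    mul_one_div_cancel hL, Real.rpow_one, one_div]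

end Exponents

theorem rpow_le_div_rpow_one_sub {α β w : ℝ} (hα : α ≤ 1) (hβ : 0 < β) (hw : β ≤ w) :
    w ^ α ≤ w / β ^ (1 - α) := by
  rw [le_div_iff₀ (by positivity)]
  calc w ^ α * β ^ (1 - α) ≤ w ^ α * w ^ (1 - α) :=
      mul_le_mul_of_nonneg_left (Real.rpow_le_rpow hβ.le hw (by linarith))
        (Real.rpow_nonneg (hβ.le.trans hw) α)
    _ = w := by rw [← Real.rpow_add (hβ.trans_le hw), add_sub_cancel, Real.rpow_one]

theorem le_one_of_rpow_mul_le {α w q : ℝ} (hα₀ : 0 ≤ α) (hα₁ : α ≤ 1) (hw : 0 < w)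
    (h₁ : w ^ α * q ≤ w) (h₂ : w ^ α * q ≤ 1) : q ≤ 1 := by
  rcases le_total w 1 with hw1 | hw1
  · have : w ≤ w ^ α := Real.self_le_rpow_of_le_one hw.le hw1 hα₁
    exact le_of_mul_le_mul_left (by linarith) (by positivity : 0 < w ^ α)
  · nlinarith [Real.one_le_rpow hw1 hα₀]

section Polytope

variable {d m : ℕ} {A : Matrix (Fin m) (Fin d) ℝ} {b : Fin m → ℝ} {x : Fin d → ℝ}

theorem Amat_eq_diagonal_mul (A : Matrix (Fin m) (Fin d) ℝ) (b : Fin m → ℝ) (x : Fin d → ℝ) :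
    Amat A b x = diagonal (fun i => (slack A b x i)⁻¹) * A := by
  ext i j
  rw [Amat, of_apply, diagonal_mul, div_eq_inv_mul]

theorem mulVec_injective_Amat (hx : x ∈ interiorPoly A b) (hA : Function.Injective A.mulVec) :
    Function.Injective (Amat A b x).mulVec := by
  have hD : IsUnit (diagonal fun i => (slack A b x i)⁻¹) :=
    isUnit_diagonal.mpr (Pi.isUnit_iff.mpr fun i => (inv_pos.mpr (hx i)).ne'.isUnit)
  intro u v huv
  rw [Amat_eq_diagonal_mul, ← mulVec_mulVec, ← mulVec_mulVec] at huv
  exact hA (mulVec_injective_of_isUnit hD huv)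

theorem slack_div_slack_sub_one (hx : x ∈ interiorPoly A b) (y : Fin d → ℝ) (i : Fin m) :
    slack A b y i / slack A b x i - 1 = (Amat A b x *ᵥ (x - y)) i := by
  rw [Amat_eq_diagonal_mul, ← mulVec_mulVec, mulVec_diagonal, mulVec_sub]
  field_simp [(hx i).ne']
  simp only [slack, Pi.sub_apply]
  ring

theorem johnMat_eq (A : Matrix (Fin m) (Fin d) ℝ) (b : Fin m → ℝ) (x : Fin d → ℝ)
    (w : Fin m → ℝ) : johnMat A b x w = (Amat A b x)ᵀ * diagonal w * Amat A b x := by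
  ext j k
  rw [mul_apply]
  simp only [johnMat, Matrix.sum_apply, Matrix.smul_apply, vecMulVec_apply, mul_diagonal,
    transpose_apply, Amat, of_apply, smul_eq_mul]
  exact Finset.sum_congr rfl fun l _ => by ring

theorem johnProj_apply_self {w : Fin m → ℝ} (hw : ∀ i, 0 < w i) (i : Fin m) :
    johnProj A b x w i i =
      w i ^ alphaJ d m * weightedLeverage (Amat A b x) (fun k => w k ^ alphaJ d m) i := by
  rw [johnProj, mul_diagonal, Matrix.mul_assoc (Matrix.diagonal _ * Amat A b x),
    Matrix.mul_assoc (Matrix.diagonal _), diagonal_mul, ← Matrix.mul_assoc,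
    mul_mul_transpose_apply_self, weightedLeverage, mul_right_comm, ← Real.rpow_add (hw i),
    add_halves]

end Polytope

namespace IsJohnWeight

variable {d m : ℕ} {A : Matrix (Fin m) (Fin d) ℝ} {b : Fin m → ℝ} {x : Fin d → ℝ}
  {w : Fin m → ℝ}

theorem betaJ_le (hw : IsJohnWeight A b x w) (i : Fin m) : betaJ d m ≤ w i := by
  have hfix := hw.2 i
  rw [johnProj_apply_self hw.1] at hfix
  have := mul_nonneg (Real.rpow_nonneg (hw.1 i).le (alphaJ d m)) <|
    weightedLeverage_nonneg (B := Amat A b x) (fun k => Real.rpow_nonneg (hw.1 k).le (alphaJ d m)) i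
  linarith

theorem rpow_alphaJ_le (hw : IsJohnWeight A b x w) (hd : 0 < d) (hdm : d ≤ m) (i : Fin m) :
    w i ^ alphaJ d m ≤ 2 * w i := calc
  w i ^ alphaJ d m ≤ w i / betaJ d m ^ (1 - alphaJ d m) :=
    rpow_le_div_rpow_one_sub (alphaJ_le_one hd hdm) (betaJ_pos hd hdm) (hw.betaJ_le i)
  _ = 2 * w i := by rw [betaJ_rpow_one_sub_alphaJ hd hdm]; ring

theorem weightedLeverage_le_one (hw : IsJohnWeight A b x w) (hd : 0 < d) (hdm : d ≤ m)
    (hA : Function.Injective A.mulVec) (hx : x ∈ interiorPoly A b) (i : Fin m) :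
    weightedLeverage (Amat A b x) (fun k => w k ^ alphaJ d m) i ≤ 1 := by
  have hfix := hw.2 i
  rw [johnProj_apply_self hw.1] at hfix
  refine le_one_of_rpow_mul_le (alphaJ_nonneg hd hdm) (alphaJ_le_one hd hdm) (hw.1 i)
    (by linarith [betaJ_pos hd hdm]) ?_
  exact mul_weightedLeverage_le_one (mulVec_injective_Amat hx hA)
    (fun k => Real.rpow_pos_of_pos (hw.1 k) _) i

theorem sq_Amat_mulVec_apply_le (hw : IsJohnWeight A b x w) (hd : 0 < d) (hdm : d ≤ m)
    (hA : Function.Injective A.mulVec) (hx : x ∈ interiorPoly A b) (v : Fin d → ℝ)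
    (i : Fin m) : (Amat A b x *ᵥ v) i ^ 2 ≤ 2 * (v ⬝ᵥ (johnMat A b x w *ᵥ v)) := by
  set B := Amat A b x
  set c := fun k => w k ^ alphaJ d m
  have hc : ∀ k, 0 < c k := fun k => Real.rpow_pos_of_pos (hw.1 k) _
  have hGv : 0 ≤ v ⬝ᵥ ((Bᵀ * Matrix.diagonal c * B) *ᵥ v) := by
    simpa using (posSemidef_transpose_diagonal_mul fun k => (hc k).le).dotProduct_mulVec_nonneg v
  calc (B *ᵥ v) i ^ 2
      ≤ weightedLeverage B c i * (v ⬝ᵥ ((Bᵀ * Matrix.diagonal c * B) *ᵥ v)) :=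
        sq_mulVec_apply_le_weightedLeverage_mul (mulVec_injective_Amat hx hA) hc v i
    _ ≤ v ⬝ᵥ ((Bᵀ * Matrix.diagonal c * B) *ᵥ v) :=
        mul_le_of_le_one_left hGv (hw.weightedLeverage_le_one hd hdm hA hx i)
    _ ≤ 2 * (v ⬝ᵥ (johnMat A b x w *ᵥ v)) := by
        rw [johnMat_eq, dotProduct_transpose_diagonal_mul_mulVec,
          dotProduct_transpose_diagonal_mul_mulVec, Finset.mul_sum]
        refine Finset.sum_le_sum fun k _ => ?_
        rw [← mul_assoc]
        exact mul_le_mul_of_nonneg_right (hw.rpow_alphaJ_le hd hdm k) (sq_nonneg _)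

end IsJohnWeight

theorem john_slackness_slowly_varying_general (d m : ℕ) (hd : 0 < d) (hdm : d ≤ m)
    (A : Matrix (Fin m) (Fin d) ℝ) (b : Fin m → ℝ) (hrank : A.rank = d)
    (x y : Fin d → ℝ) (hx : x ∈ interiorPoly A b)
    (w : Fin m → ℝ) (hw : IsJohnWeight A b x w) :
    ∀ i, |1 - slack A b y i / slack A b x i| ≤
      2 * Real.sqrt ((x - y) ⬝ᵥ (johnMat A b x w *ᵥ (x - y))) := by
  intro i
  have hA : Function.Injective A.mulVec :=
    mulVec_injective_of_rank_eq_card (by rw [hrank, Fintype.card_fin])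
  have hJ : 0 ≤ (x - y) ⬝ᵥ (johnMat A b x w *ᵥ (x - y)) := by
    simpa [johnMat_eq] using (posSemidef_transpose_diagonal_mul
      (B := Amat A b x) fun k => (hw.1 k).le).dotProduct_mulVec_nonneg (x - y)
  rw [abs_sub_comm, slack_div_slack_sub_one hx]
  refine abs_le_of_sq_le_sq ?_ (by positivity)
  rw [mul_pow, Real.sq_sqrt hJ]
  linarith [hw.sq_Amat_mulVec_apply_le hd hdm hA hx (x - y) i]

/-- Slackness varies slowly in the John local norm: if `w` is a positive solution of
the John fixed-point equations at `x`, then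
`max_i |1 − s_{y,i}/s_{x,i}| ≤ 2‖x−y‖_{J_x}`. -/
theorem john_slackness_slowly_varying (d m : ℕ) (hd : 0 < d) (hdm : d ≤ m)
    (A : Matrix (Fin m) (Fin d) ℝ) (b : Fin m → ℝ) (hrank : A.rank = d)
    (x y : Fin d → ℝ) (hx : x ∈ interiorPoly A b) (hy : y ∈ interiorPoly A b)
    (w : Fin m → ℝ) (hw : IsJohnWeight A b x w) :
    ∀ i, |1 - slack A b y i / slack A b x i| ≤
      2 * Real.sqrt ((x - y) ⬝ᵥ (johnMat A b x w *ᵥ (x - y))) :=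
  john_slackness_slowly_varying_general d m hd hdm A b hrank x y hx w hw

end PolytopeWalks
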